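/- arXiv:1607.07050 — 2 statements merged into one kernel-verified Lean document; each statement's English description precedes it below -/
import Mathlib

section
/- For every integer r ≥ 1, every n ∈ ℕ and every x ∈ ℂ, the Euler polynomial of order r satisfies Eₙ⁽ʳ⁾(x) = (2^{r−1}/(r−1)!)·Σ_{j=0}^{r−1} Σ_{k=0}^{⌊n/2⌋} (−1)^j·s(r, r−j)·C(n,2k)·r^{n−2k}·E_{2k+r−j−1}·E_{n−2k}(x/r), where Eₘ = Eₘ(0), C(·,·) are binomial coefficients, and s(·,·) are signed Stirling numbers of the first kind. -/
open Polynomial PowerSeries Finset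

/-- The `n`-th Bernoulli polynomial, viewed in `ℂ[X]`. -/
noncomputable def Bc (n : ℕ) : Polynomial ℂ :=
  (Polynomial.bernoulli n).map (algebraMap ℚ ℂ)

/-- The `n`-th Euler polynomial in `ℂ[X]`:
`Eₙ(X) = (2/(n+1)) * (B_{n+1}(X) - 2^{n+1} * B_{n+1}(X/2))`. -/
noncomputable def Ec (n : ℕ) : Polynomial ℂ :=
  Polynomial.C (2 / ((n : ℂ) + 1)) *
    (Bc (n + 1) -
      Polynomial.C ((2 : ℂ) ^ (n + 1)) *
        (Bc (n + 1)).comp (Polynomial.C ((2 : ℂ)⁻¹) * Polynomial.X))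

/-- The signed Stirling number of the first kind `s(n, k)`, defined as the coefficient of
`x^k` in the falling factorial `x (x-1) ⋯ (x - n + 1)`. -/
noncomputable def stir (n k : ℕ) : ℂ :=
  (∏ i ∈ Finset.range n, (Polynomial.X - Polynomial.C (i : ℂ))).coeff k



noncomputable def EP (y : ℂ) : PowerSeries ℂ :=
  PowerSeries.mk fun n => (Ec n).eval y / n.factorial

noncomputable def BSer (y : ℂ) : PowerSeries ℂ :=
  PowerSeries.mk fun n => aeval y ((1 / n.factorial : ℚ) • Polynomial.bernoulli n)

lemma rescale_X' (a : ℂ) : rescale a (PowerSeries.X : PowerSeries ℂ) = PowerSeries.C a * PowerSeries.X := by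
  ext n
  simp only [coeff_rescale, PowerSeries.coeff_X, PowerSeries.coeff_C_mul]
  rcases eq_or_ne n 1 with h | h <;> simp [h]

lemma key0 (y : ℂ) : PowerSeries.X * EP y = PowerSeries.C 2 * (BSer y - rescale 2 (BSer (y/2))) := by
  ext n
  cases n with
  | zero =>
    rw [PowerSeries.coeff_zero_X_mul]
    simp only [PowerSeries.coeff_C_mul, map_sub, coeff_rescale, BSer, coeff_mk]
    simp [Polynomial.bernoulli_zero]
  | succ n =>
    rw [PowerSeries.coeff_succ_X_mul]
    simp only [EP, BSer, coeff_mk, PowerSeries.coeff_C_mul, map_sub, coeff_rescale, coeff_mk]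
    have h1 : ∀ z : ℂ, aeval z ((1 / ((n+1).factorial : ℚ)) • Polynomial.bernoulli (n+1))
        = ((n+1).factorial : ℂ)⁻¹ * (Bc (n+1)).eval z := by
      intro z
      rw [map_smul, Algebra.smul_def, Bc, eval_map, ← aeval_def, one_div, map_inv₀, map_natCast]
    rw [h1, h1]
    simp only [Ec, eval_mul, eval_C, eval_sub, eval_mul, eval_comp, eval_C, eval_X]
    have hn : ((n:ℂ)+1) ≠ 0 := by exact_mod_cast (Nat.succ_ne_zero n)
    have hfac : ((n.factorial : ℂ)) ≠ 0 := Nat.cast_ne_zero.2 n.factorial_ne_zero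
    have hff : (((n+1).factorial : ℂ)) = ((n:ℂ)+1) * (n.factorial : ℂ) := by
      rw [Nat.factorial_succ]; push_cast; ring
    rw [hff, show (2:ℂ)⁻¹ * y = y / 2 by ring]
    field_simp
    try ring

lemma exp_sub_one_ne : (PowerSeries.exp ℂ - 1) ≠ 0 := by
  intro h
  have := congrArg (PowerSeries.coeff 1) h
  simp [PowerSeries.exp, PowerSeries.coeff_one] at this

lemma X_ne : (PowerSeries.X : PowerSeries ℂ) ≠ 0 := PowerSeries.X_ne_zero

lemma exp_sq : (PowerSeries.exp ℂ) ^ 2 = rescale 2 (PowerSeries.exp ℂ) := by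
  have := PowerSeries.exp_pow_eq_rescale_exp (A := ℂ) 2
  simpa using this

lemma euler_gf (y : ℂ) :
    (PowerSeries.exp ℂ + 1) * EP y = PowerSeries.C 2 * rescale y (PowerSeries.exp ℂ) := by
  have hc : (PowerSeries.X * (PowerSeries.exp ℂ - 1)) ≠ 0 :=
    mul_ne_zero X_ne exp_sub_one_ne
  apply mul_left_cancel₀ hc
  have gf : ∀ z : ℂ, BSer z * (PowerSeries.exp ℂ - 1)
      = PowerSeries.X * rescale z (PowerSeries.exp ℂ) :=
    fun z => Polynomial.bernoulli_generating_function z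
  calc PowerSeries.X * (PowerSeries.exp ℂ - 1) * ((PowerSeries.exp ℂ + 1) * EP y)
      = (PowerSeries.X * EP y) * ((PowerSeries.exp ℂ - 1) * (PowerSeries.exp ℂ + 1)) := by ring
    _ = (PowerSeries.C 2 * (BSer y - rescale 2 (BSer (y/2)))) * ((PowerSeries.exp ℂ - 1) * (PowerSeries.exp ℂ + 1)) := by rw [key0]
    _ = PowerSeries.C 2 * ((BSer y * (PowerSeries.exp ℂ - 1)) * (PowerSeries.exp ℂ + 1)
          - rescale 2 (BSer (y/2)) * ((PowerSeries.exp ℂ)^2 - 1)) := by ring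
    _ = PowerSeries.C 2 * ((PowerSeries.X * rescale y (PowerSeries.exp ℂ)) * (PowerSeries.exp ℂ + 1)
          - rescale 2 (BSer (y/2) * (PowerSeries.exp ℂ - 1))) := by
            rw [gf, exp_sq, map_mul, map_sub, map_one]
    _ = PowerSeries.C 2 * ((PowerSeries.X * rescale y (PowerSeries.exp ℂ)) * (PowerSeries.exp ℂ + 1)
          - PowerSeries.C 2 * PowerSeries.X * rescale y (PowerSeries.exp ℂ)) := by
            rw [gf, map_mul, rescale_X', rescale_rescale]
            norm_num
    _ = PowerSeries.X * (PowerSeries.exp ℂ - 1) * (PowerSeries.C 2 * rescale y (PowerSeries.exp ℂ)) := by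
            rw [show PowerSeries.C (2:ℂ) = (2:PowerSeries ℂ) from map_ofNat _ 2]; ring


local notation "ee" => PowerSeries.exp ℂ
local notation "D" => PowerSeries.derivative (R := ℂ)

noncomputable def av : ℕ → ℕ → ℂ
  | 0, 0 => 1
  | 0, _+1 => 0
  | m+1, k => k * (av m k - av m (k-1))

lemma av_succ (m k : ℕ) : av (m+1) k = k * (av m k - av m (k-1)) := rfl

lemma av_gt : ∀ m k : ℕ, m < k → av m k = 0 := by
  intro m
  induction m with
  | zero => intro k hk; match k, hk with | (j+1), _ => rfl
  | succ m ih =>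
    intro k hk
    rw [av_succ, ih k (by omega), ih (k-1) (by omega)]
    ring

lemma deriv_exp' : D ee = ee := by
  ext n
  rw [PowerSeries.coeff_derivative]
  simp only [PowerSeries.exp, coeff_mk]
  have h : ((n+1).factorial : ℚ) = ((n:ℚ)+1) * n.factorial := by
    rw [Nat.factorial_succ]; push_cast; ring
  rw [h, map_div₀, map_div₀, map_one, map_mul]
  push_cast
  have hfac' : ((n.factorial : ℂ)) ≠ 0 := Nat.cast_ne_zero.2 n.factorial_ne_zero
  have hn' : ((n:ℂ)+1) ≠ 0 := by exact_mod_cast (Nat.succ_ne_zero n)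
  field_simp

lemma deriv_e1 : D (ee + 1) = ee := by
  rw [map_add, deriv_exp']
  simp

lemma deriv_epow (k : ℕ) : D (ee ^ k) = k • (ee ^ k) := by
  rw [Derivation.leibniz_pow, deriv_exp']
  cases k with
  | zero => simp
  | succ k =>
    rw [Nat.add_sub_cancel, smul_eq_mul, ← pow_succ]


lemma deriv_e1pow_mul (j : ℕ) : (ee + 1) * D ((ee + 1) ^ j) = j • (ee * (ee + 1) ^ j) := by
  cases j with
  | zero => simp
  | succ j =>
    rw [Derivation.leibniz_pow, deriv_e1, Nat.add_sub_cancel, smul_eq_mul]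
    rw [mul_smul_comm, pow_succ]
    ring_nf

noncomputable def fm (m : ℕ) : PowerSeries ℂ :=
  PowerSeries.mk fun n => (Ec (n+m)).eval 0 / n.factorial

lemma deriv_fm (m : ℕ) : D (fm m) = fm (m+1) := by
  ext n
  rw [PowerSeries.coeff_derivative]
  simp only [fm, coeff_mk]
  have h : ((n+1).factorial : ℂ) = ((n:ℂ)+1) * n.factorial := by
    rw [Nat.factorial_succ]; push_cast; ring
  rw [h, show n + 1 + m = n + (m+1) by ring]
  have hfac : ((n.factorial : ℂ)) ≠ 0 := Nat.cast_ne_zero.2 n.factorial_ne_zero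
  have hn : ((n:ℂ)+1) ≠ 0 := by exact_mod_cast (Nat.succ_ne_zero n)
  field_simp

lemma fm_zero : fm 0 = EP 0 := by
  ext n; simp [fm, EP]

lemma term_step (k j : ℕ) :
    (ee+1) * D (ee^k * (ee+1)^j) - ((k+j+1) : ℕ) • (ee * (ee^k * (ee+1)^j))
      = k • (ee^k * (ee+1)^(j+1)) - (k+1) • (ee^(k+1) * (ee+1)^j) := by
  have h2 := deriv_epow k
  rw [Derivation.leibniz, smul_eq_mul, smul_eq_mul, h2]
  have h3 : (ee+1) * (ee^k * D ((ee+1)^j) + (ee+1)^j * (k • (ee^k)))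
      = ee^k * (j • (ee * (ee+1)^j)) + (ee+1)^(j+1) * (k • ee^k) := by
    rw [← deriv_e1pow_mul j]; ring
  rw [h3]
  simp only [nsmul_eq_mul]
  push_cast
  ring

lemma rep : ∀ m : ℕ, (ee+1)^(m+1) * fm m
    = ∑ k ∈ Finset.range (m+1),
        PowerSeries.C (2 * av m k) * (ee^k * (ee+1)^(m-k)) := by
  intro m
  induction m with
  | zero =>
    rw [pow_one, fm_zero, euler_gf,
      show PowerSeries.rescale (0:ℂ) (PowerSeries.exp ℂ) = 1 by
        rw [PowerSeries.rescale_zero]; simp]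
    simp [av]
  | succ m ih =>
    have key : (ee+1)^(m+1+1) * fm (m+1)
        = (ee+1) * D ((ee+1)^(m+1) * fm m) - (m+1) • (ee * ((ee+1)^(m+1) * fm m)) := by
      rw [Derivation.leibniz, Derivation.leibniz_pow, deriv_e1, deriv_fm,
        Nat.add_sub_cancel]
      simp only [smul_eq_mul, nsmul_eq_mul]
      push_cast
      ring
    have hterm : ∀ k ∈ Finset.range (m+1),
        (ee+1) * D (PowerSeries.C (2 * av m k) * (ee^k * (ee+1)^(m-k)))
          - (m+1) • (ee * (PowerSeries.C (2 * av m k) * (ee^k * (ee+1)^(m-k))))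
        = (PowerSeries.C (2 * (k * av m k)) * (ee^k * (ee+1)^(m+1-k)))
          - (PowerSeries.C (2 * ((k+1) * av m k)) * (ee^(k+1) * (ee+1)^(m-k))) := by
      intro k hk
      have hk' : k ≤ m := by have := Finset.mem_range.mp hk; omega
      have ts := term_step k (m-k)
      rw [show k + (m-k) + 1 = m+1 by omega, show (m-k)+1 = m+1-k by omega] at ts
      rw [Derivation.leibniz, PowerSeries.derivative_C, smul_zero, add_zero, smul_eq_mul]
      have lhs_eq : (ee+1) * (PowerSeries.C (2 * av m k) * D (ee^k * (ee+1)^(m-k)))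
          - (m+1) • (ee * (PowerSeries.C (2 * av m k) * (ee^k * (ee+1)^(m-k))))
          = PowerSeries.C (2 * av m k) *
              ((ee+1) * D (ee^k * (ee+1)^(m-k)) - (m+1) • (ee * (ee^k * (ee+1)^(m-k)))) := by
        simp only [nsmul_eq_mul]; ring
      rw [lhs_eq, ts]
      simp only [nsmul_eq_mul, map_mul, map_natCast, map_add, map_one, map_ofNat]
      push_cast
      ring
    rw [key, ih, map_sum, Finset.mul_sum, Finset.mul_sum, Finset.smul_sum, ← Finset.sum_sub_distrib,
      Finset.sum_congr rfl hterm, Finset.sum_sub_distrib]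
    have hF : ∑ k ∈ Finset.range (m+1),
          PowerSeries.C (2*(k*av m k)) * (ee^k*(ee+1)^(m+1-k))
        = ∑ k ∈ Finset.range (m+2),
          PowerSeries.C (2*(k*av m k)) * (ee^k*(ee+1)^(m+1-k)) := by
      rw [Finset.sum_range_succ (n := m+1), av_gt m (m+1) (by omega)]
      norm_num
    have hG : ∑ k ∈ Finset.range (m+1),
          PowerSeries.C (2*((k+1)*av m k)) * (ee^(k+1)*(ee+1)^(m-k))
        = ∑ k ∈ Finset.range (m+2),
          PowerSeries.C (2*(k*av m (k-1))) * (ee^k*(ee+1)^(m+1-k)) := by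
      rw [Finset.sum_range_succ'
        (fun k => PowerSeries.C (2*(k*av m (k-1))) * (ee^k*(ee+1)^(m+1-k))) (m+1)]
      simp only [Nat.cast_zero, zero_mul, mul_zero, map_zero, zero_mul, add_zero]
      apply Finset.sum_congr rfl
      intro k hk
      rw [show m+1-(k+1) = m-k by omega, show (k+1)-1 = k by omega]
      push_cast
      ring
    rw [hF, hG, ← Finset.sum_sub_distrib]
    apply Finset.sum_congr rfl
    intro k hk
    rw [av_succ]
    simp only [map_mul, map_ofNat, map_natCast, map_sub]
    push_cast
    ring

lemma resc_C (a c : ℂ) : rescale a (PowerSeries.C c) = PowerSeries.C c := by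
  ext n
  rw [coeff_rescale]
  cases n with
  | zero => simp
  | succ n => simp [PowerSeries.coeff_C]

lemma exp_inv_mul : ee * rescale (-1:ℂ) ee = 1 :=
  PowerSeries.exp_mul_exp_neg_eq_one

lemma rep_neg (m : ℕ) : (ee+1)^(m+1) * rescale (-1:ℂ) (fm m)
    = ∑ k ∈ Finset.range (m+1),
        PowerSeries.C (2 * av m k) * (ee * (ee+1)^(m-k)) := by
  have h := congrArg (rescale (-1:ℂ)) (rep m)
  rw [map_mul, map_pow, map_sum] at h
  simp only [map_mul, map_pow, map_add, map_one, resc_C] at h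
  have hι : ee * rescale (-1:ℂ) ee = 1 := exp_inv_mul
  have e2 : ee * (rescale (-1:ℂ) ee + 1) = ee + 1 := by
    rw [mul_add, hι, mul_one, add_comm]
  calc (ee+1)^(m+1) * rescale (-1:ℂ) (fm m)
      = (ee * (rescale (-1:ℂ) ee + 1))^(m+1) * rescale (-1:ℂ) (fm m) := by rw [e2]
    _ = ee^(m+1) * ((rescale (-1:ℂ) ee + 1)^(m+1) * rescale (-1:ℂ) (fm m)) := by
        rw [mul_pow]; ring
    _ = ee^(m+1) * ∑ k ∈ Finset.range (m+1),
          PowerSeries.C (2 * av m k)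
            * (rescale (-1:ℂ) ee ^ k * (rescale (-1:ℂ) ee + 1)^(m-k)) := by
          rw [h]; simp only [map_mul]
    _ = ∑ k ∈ Finset.range (m+1),
          PowerSeries.C (2 * av m k) * (ee * (ee+1)^(m-k)) := by
        rw [Finset.mul_sum]
        apply Finset.sum_congr rfl
        intro k hk
        have hk' : k ≤ m := by have := Finset.mem_range.mp hk; omega
        have hpow : ee^(m+1) = ee^k * ee^(m-k) * ee := by
          rw [mul_assoc, ← pow_succ, ← pow_add]
          congr 1
          omega
        rw [hpow]
        calc ee^k * ee^(m-k) * ee * (PowerSeries.C (2 * av m k)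
              * (rescale (-1:ℂ) ee ^ k * (rescale (-1:ℂ) ee + 1)^(m-k)))
            = PowerSeries.C (2 * av m k)
              * ((ee * rescale (-1:ℂ) ee)^k * ((ee*(rescale (-1:ℂ) ee + 1))^(m-k) * ee)) := by
              rw [mul_pow, mul_pow]; ring
          _ = PowerSeries.C (2 * av m k) * (ee * (ee+1)^(m-k)) := by
              rw [hι, e2, one_pow, one_mul, mul_comm ((ee+1)^(m-k)) ee]

lemma stir_rec (r m : ℕ) : stir (r+1) (m+1) = stir r m - r * stir r (m+1) := by
  unfold stir
  rw [Finset.prod_range_succ, mul_sub, Polynomial.coeff_sub, Polynomial.coeff_mul_X,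
    Polynomial.coeff_mul_C]
  ring

lemma stir_zero (r : ℕ) (hr : 1 ≤ r) : stir r 0 = 0 := by
  unfold stir
  rw [Polynomial.coeff_zero_eq_eval_zero, Polynomial.eval_prod]
  apply Finset.prod_eq_zero (Finset.mem_range.mpr hr)
  simp

lemma stir_gt (r k : ℕ) (h : r < k) : stir r k = 0 := by
  unfold stir
  apply Polynomial.coeff_eq_zero_of_natDegree_lt
  calc (∏ i ∈ Finset.range r, (Polynomial.X - Polynomial.C (i : ℂ))).natDegree
      ≤ ∑ i ∈ Finset.range r, (Polynomial.X - Polynomial.C (i : ℂ)).natDegree :=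
        Polynomial.natDegree_prod_le _ _
    _ ≤ ∑ i ∈ Finset.range r, 1 := by
        apply Finset.sum_le_sum; intro i _; exact (Polynomial.natDegree_X_sub_C _).le
    _ = r := by simp
    _ < k := h

lemma stir_one_one : stir 1 1 = 1 := by
  unfold stir
  simp

noncomputable def Uv (r k : ℕ) : ℂ :=
  ∑ m ∈ Finset.range r, (-1:ℂ)^m * stir r (m+1) * av m k

lemma binom_aux (r k : ℕ) (hr : 1 ≤ r) :
    ((k:ℂ)+1+r) * ((r-1).choose (k+1) : ℂ) + ((k:ℂ)+1) * ((r-1).choose k : ℂ)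
      = r * (r.choose (k+1) : ℂ) := by
  rcases le_or_gt (k+1) r with hk | hk
  · have h1 : (r-1).choose (k+1) * (k+1) = (r-1).choose k * (r-1-k) :=
      Nat.choose_succ_right_eq (r-1) k
    have h2 : r.choose (k+1) = (r-1).choose k + (r-1).choose (k+1) := by
      conv_lhs => rw [show r = (r-1)+1 by omega]
      exact Nat.choose_succ_succ (r-1) k
    have h1c : ((r-1).choose (k+1) : ℂ) * ((k:ℂ)+1) = ((r-1).choose k : ℂ) * ((r:ℂ)-1-k) := by
      have := congrArg (Nat.cast (R := ℂ)) h1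
      push_cast at this
      rw [this]
      congr 1
      have : ((r-1-k : ℕ) : ℂ) = (r:ℂ)-1-k := by
        have hrk : k ≤ r - 1 := by omega
        push_cast [Nat.cast_sub hrk, Nat.cast_sub (by omega : 1 ≤ r)]
        ring
      rw [← this]
    have h2c : (r.choose (k+1) : ℂ) = ((r-1).choose k : ℂ) + ((r-1).choose (k+1) : ℂ) := by
      exact_mod_cast congrArg (Nat.cast (R := ℂ)) h2
    rw [h2c]
    linear_combination h1c
  · have e1 : (r-1).choose (k+1) = 0 := Nat.choose_eq_zero_of_lt (by omega)
    have e2 : (r-1).choose k = 0 := Nat.choose_eq_zero_of_lt (by omega)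
    have e3 : r.choose (k+1) = 0 := Nat.choose_eq_zero_of_lt (by omega)
    rw [e1, e2, e3]
    simp

lemma U_val : ∀ r : ℕ, 1 ≤ r → ∀ k : ℕ,
    Uv r k = ((r-1).factorial : ℂ) * (-1:ℂ)^(r-1+k) * ((r-1).choose k : ℂ) := by
  intro r hr
  induction r, hr using Nat.le_induction with
  | base =>
    intro k
    unfold Uv
    rw [Finset.sum_range_one, stir_one_one]
    cases k with
    | zero => simp [av]
    | succ k => simp [av, Nat.choose_eq_zero_of_lt (Nat.succ_pos k)]
  | succ r hr ih =>
    intro k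
    have hrec : Uv (r+1) k = -(k:ℂ) * Uv r k + (k:ℂ) * Uv r (k-1) - r * Uv r k := by
      unfold Uv
      have step1 : ∀ m ∈ Finset.range (r+1),
          (-1:ℂ)^m * stir (r+1) (m+1) * av m k
          = (-1:ℂ)^m * stir r m * av m k - r * ((-1:ℂ)^m * stir r (m+1) * av m k) := by
        intro m _
        rw [stir_rec]
        ring
      rw [Finset.sum_congr rfl step1, Finset.sum_sub_distrib, ← Finset.mul_sum]
      have snd : ∑ m ∈ Finset.range (r+1), (-1:ℂ)^m * stir r (m+1) * av m k
          = ∑ m ∈ Finset.range r, (-1:ℂ)^m * stir r (m+1) * av m k := by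
        rw [Finset.sum_range_succ, stir_gt r (r+1) (by omega)]
        simp
      have fst : ∑ m ∈ Finset.range (r+1), (-1:ℂ)^m * stir r m * av m k
          = -(k:ℂ) * (∑ m ∈ Finset.range r, (-1:ℂ)^m * stir r (m+1) * av m k)
            + (k:ℂ) * (∑ m ∈ Finset.range r, (-1:ℂ)^m * stir r (m+1) * av m (k-1)) := by
        rw [Finset.sum_range_succ'
          (fun m => (-1:ℂ)^m * stir r m * av m k) r]
        rw [stir_zero r hr]
        simp only [mul_zero, zero_mul, pow_zero, one_mul, add_zero]
        rw [Finset.mul_sum, Finset.mul_sum, ← Finset.sum_add_distrib]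
        apply Finset.sum_congr rfl
        intro m _
        rw [av_succ]
        ring
      rw [snd, fst]
      try ring
    cases k with
    | zero =>
      rw [hrec, ih 0]
      simp only [Nat.cast_zero, neg_zero, zero_mul, add_zero, zero_add, Nat.choose_zero_right,
        Nat.cast_one, mul_one, Nat.add_sub_cancel]
      have hfac : ((r).factorial : ℂ) = (r:ℂ) * ((r-1).factorial : ℂ) := by
        rw [← Nat.mul_factorial_pred (by omega : r ≠ 0)]; push_cast; ring
      rw [hfac, show (-1:ℂ)^r = (-1:ℂ)^(r-1) * (-1) by
        rw [← pow_succ, show r - 1 + 1 = r by omega]]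
      ring
    | succ k =>
      simp only [Nat.add_sub_cancel] at hrec
      rw [hrec, ih (k+1), ih k]
      have hfac : ((r).factorial : ℂ) = (r:ℂ) * ((r-1).factorial : ℂ) := by
        rw [← Nat.mul_factorial_pred (by omega : r ≠ 0)]; push_cast; ring
      rw [show r + 1 - 1 = r by omega, hfac]
      have hb := binom_aux r k hr
      have hsign1 : (-1:ℂ)^(r+(k+1)) = (-1:ℂ)^(r-1+(k+1)) * (-1) := by
        rw [← pow_succ, show r-1+(k+1)+1 = r+(k+1) by omega]
      have hsign2 : (-1:ℂ)^(r-1+k) = (-1:ℂ)^(r-1+(k+1)) * (-1) := by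
        rw [show r-1+(k+1) = r-1+k+1 by omega, pow_succ]
        ring
      rw [hsign1, hsign2]
      push_cast
      linear_combination ((-1:ℂ)^(r-1+(k+1)) * (-1) * ((r-1).factorial : ℂ)) * hb

lemma refl_sum (r k : ℕ) (hr : 1 ≤ r) :
    ∑ j ∈ Finset.range r, (-1:ℂ)^j * stir r (r-j) * av (r-1-j) k
      = ((r-1).factorial : ℂ) * (-1:ℂ)^k * ((r-1).choose k : ℂ) := by
  have hrefl := Finset.sum_range_reflect
    (fun m => (-1:ℂ)^(r-1-m) * stir r (m+1) * av m k) r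
  have step1 : ∑ j ∈ Finset.range r, (-1:ℂ)^j * stir r (r-j) * av (r-1-j) k
      = ∑ j ∈ Finset.range r,
          (-1:ℂ)^(r-1-(r-1-j)) * stir r ((r-1-j)+1) * av (r-1-j) k := by
    apply Finset.sum_congr rfl
    intro j hj
    have hj' : j ≤ r - 1 := by have := Finset.mem_range.mp hj; omega
    rw [show r-1-(r-1-j) = j by omega, show (r-1-j)+1 = r-j by omega]
  rw [step1, hrefl]
  have step2 : ∑ m ∈ Finset.range r, (-1:ℂ)^(r-1-m) * stir r (m+1) * av m k
      = (-1:ℂ)^(r-1) * Uv r k := by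
    unfold Uv
    rw [Finset.mul_sum]
    apply Finset.sum_congr rfl
    intro m hm
    have hm' : m ≤ r - 1 := by have := Finset.mem_range.mp hm; omega
    rw [show (-1:ℂ)^(r-1-m) = (-1:ℂ)^(r-1+m) by
      rw [show r-1+m = (r-1-m) + 2*m by omega, pow_add, pow_mul]; norm_num]
    rw [pow_add]
    ring
  rw [step2, U_val r hr k]
  rw [show (-1:ℂ)^(r-1+k) = (-1:ℂ)^(r-1) * (-1:ℂ)^k from pow_add _ _ _]
  have : (-1:ℂ)^(r-1) * (-1:ℂ)^(r-1) = 1 := by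
    rw [← pow_add, show (r-1)+(r-1) = 2*(r-1) by omega, pow_mul]
    norm_num
  calc (-1:ℂ)^(r-1) * (((r-1).factorial : ℂ) * ((-1:ℂ)^(r-1) * (-1:ℂ)^k) * ((r-1).choose k : ℂ))
      = ((-1:ℂ)^(r-1) * (-1:ℂ)^(r-1)) * (((r-1).factorial : ℂ) * (-1:ℂ)^k * ((r-1).choose k : ℂ)) := by
        ring
    _ = ((r-1).factorial : ℂ) * (-1:ℂ)^k * ((r-1).choose k : ℂ) := by rw [this, one_mul]

lemma per_j (r j : ℕ) (hr : 1 ≤ r) (hj : j < r) :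
    (ee+1)^r * (fm (r-1-j) + rescale (-1:ℂ) (fm (r-1-j)))
      = ∑ k ∈ Finset.range r,
          PowerSeries.C (2 * av (r-1-j) k) * ((ee^k + ee) * (ee+1)^(r-1-k)) := by
  set m := r-1-j with hm
  have hmr : m ≤ r - 1 := by omega
  have hpow : (ee+1)^r = (ee+1)^(r-1-m) * (ee+1)^(m+1) := by
    rw [← pow_add]
    congr 1
    omega
  rw [hpow, mul_assoc, mul_add, rep, rep_neg, ← Finset.sum_add_distrib, Finset.mul_sum]
  rw [show Finset.range r = Finset.range (m+1) ∪ (Finset.Ico (m+1) r) by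
    rw [Finset.range_eq_Ico, Finset.range_eq_Ico, Finset.Ico_union_Ico_eq_Ico] <;> omega]
  rw [Finset.sum_union (by
    rw [Finset.range_eq_Ico]
    exact Finset.Ico_disjoint_Ico_consecutive 0 (m+1) r)]
  have hzero : ∑ k ∈ Finset.Ico (m+1) r,
      PowerSeries.C (2 * av m k) * ((ee^k + ee) * (ee+1)^(r-1-k)) = 0 := by
    apply Finset.sum_eq_zero
    intro k hk
    have : m < k := (Finset.mem_Ico.mp hk).1
    rw [av_gt m k this]
    simp
  rw [hzero, add_zero]
  apply Finset.sum_congr rfl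
  intro k hk
  have hk' : k ≤ m := by have := Finset.mem_range.mp hk; omega
  have hexp : (ee+1)^(m-k) * (ee+1)^(r-1-m) = (ee+1)^(r-1-k) := by
    rw [← pow_add]
    congr 1
    omega
  calc (ee+1)^(r-1-m) * (PowerSeries.C (2 * av m k) * (ee^k * (ee+1)^(m-k))
        + PowerSeries.C (2 * av m k) * (ee * (ee+1)^(m-k)))
      = PowerSeries.C (2 * av m k) * ((ee^k + ee) * ((ee+1)^(m-k) * (ee+1)^(r-1-m))) := by
        ring
    _ = PowerSeries.C (2 * av m k) * ((ee^k + ee) * (ee+1)^(r-1-k)) := by rw [hexp]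

lemma star (r : ℕ) (hr : 1 ≤ r) :
    ∑ j ∈ Finset.range r, PowerSeries.C ((-1:ℂ)^j * stir r (r-j)) *
        ((ee+1)^r * (fm (r-1-j) + rescale (-1:ℂ) (fm (r-1-j))))
      = PowerSeries.C (2 * ((r-1).factorial : ℂ)) * (ee^r + 1) := by
  obtain ⟨n, rfl⟩ : ∃ n, r = n + 1 := ⟨r-1, by omega⟩
  simp only [Nat.add_sub_cancel]
  have h1 : ∑ j ∈ Finset.range (n+1), PowerSeries.C ((-1:ℂ)^j * stir (n+1) (n+1-j)) *
        ((ee+1)^(n+1) * (fm (n-j) + rescale (-1:ℂ) (fm (n-j))))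
      = ∑ j ∈ Finset.range (n+1), ∑ k ∈ Finset.range (n+1),
          PowerSeries.C ((-1:ℂ)^j * stir (n+1) (n+1-j) * (2 * av (n-j) k))
            * ((ee^k + ee) * (ee+1)^(n-k)) := by
    apply Finset.sum_congr rfl
    intro j hj
    have hpj := per_j (n+1) j (by omega) (Finset.mem_range.mp hj)
    simp only [Nat.add_sub_cancel] at hpj
    rw [hpj, Finset.mul_sum]
    apply Finset.sum_congr rfl
    intro k _
    simp only [map_mul]
    ring
  rw [h1, Finset.sum_comm]
  have h2 : ∀ k ∈ Finset.range (n+1), ∑ j ∈ Finset.range (n+1),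
        PowerSeries.C ((-1:ℂ)^j * stir (n+1) (n+1-j) * (2 * av (n-j) k))
          * ((ee^k + ee) * (ee+1)^(n-k))
      = PowerSeries.C (2 * ((n.factorial : ℂ) * (-1:ℂ)^k * (n.choose k : ℂ)))
          * ((ee^k + ee) * (ee+1)^(n-k)) := by
    intro k _
    rw [← Finset.sum_mul, ← map_sum]
    congr 2
    have hrs := refl_sum (n+1) k (by omega)
    simp only [Nat.add_sub_cancel] at hrs
    rw [← hrs, Finset.mul_sum]
    apply Finset.sum_congr rfl
    intro j _
    ring
  rw [Finset.sum_congr rfl h2]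
  have hap1 := add_pow (-ee) (ee+1) n
  have hap2 := add_pow (-1 : PowerSeries ℂ) (ee+1) n
  rw [show -ee + (ee+1) = 1 by ring, one_pow] at hap1
  rw [show -1 + (ee+1) = ee by ring] at hap2
  have h3 : ∀ k ∈ Finset.range (n+1),
      PowerSeries.C (2 * ((n.factorial : ℂ) * (-1:ℂ)^k * (n.choose k : ℂ)))
          * ((ee^k + ee) * (ee+1)^(n-k))
      = PowerSeries.C (2 * (n.factorial : ℂ)) *
          (((-ee)^k * (ee+1)^(n-k) * (n.choose k : PowerSeries ℂ))
           + ee * ((-1:PowerSeries ℂ)^k * (ee+1)^(n-k) * (n.choose k : PowerSeries ℂ))) := by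
    intro k _
    rw [show ((-ee)^k : PowerSeries ℂ) = (-1:PowerSeries ℂ)^k * ee^k from by
      rw [← neg_one_mul, mul_pow]]
    simp only [map_mul, map_pow, map_neg, map_one, map_natCast]
    rw [show PowerSeries.C (2:ℂ) = (2:PowerSeries ℂ) from map_ofNat _ 2]
    ring
  rw [Finset.sum_congr rfl h3, ← Finset.mul_sum, Finset.sum_add_distrib, ← Finset.mul_sum,
    ← hap1, ← hap2, show ee * ee^n = ee^(n+1) by rw [pow_succ]; ring]
  ring

noncomputable def Gser (m : ℕ) : PowerSeries ℂ :=
  PowerSeries.C (2⁻¹) * (fm m + rescale (-1:ℂ) (fm m))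

lemma Gser_coeff (m l : ℕ) : PowerSeries.coeff l (Gser m)
    = if Even l then (Ec (l+m)).eval 0 / l.factorial else 0 := by
  unfold Gser
  rw [PowerSeries.coeff_C_mul, map_add, coeff_rescale]
  simp only [fm, coeff_mk]
  rcases Nat.even_or_odd l with h | h
  · rw [if_pos h, h.neg_one_pow]
    ring
  · rw [if_neg (Nat.not_even_iff_odd.mpr h), h.neg_one_pow]
    ring

lemma coeff_PG (r : ℕ) (hr : 1 ≤ r) (x : ℂ) (m n : ℕ) :
    (n.factorial : ℂ) *
        PowerSeries.coeff n (rescale (r:ℂ) (EP (x/(r:ℂ))) * Gser m)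
      = ∑ k ∈ Finset.range (n/2+1),
          (n.choose (2*k) : ℂ) * (r:ℂ)^(n-2*k) * (Ec (2*k+m)).eval 0
            * (Ec (n-2*k)).eval (x/(r:ℂ)) := by
  rw [PowerSeries.coeff_mul, Nat.sum_antidiagonal_eq_sum_range_succ_mk]
  have hterm : ∀ i ∈ Finset.range (n+1),
      PowerSeries.coeff i (rescale (r:ℂ) (EP (x/(r:ℂ)))) *
        PowerSeries.coeff (n-i) (Gser m)
      = if Even (n-i) then
          (r:ℂ)^i * ((Ec i).eval (x/(r:ℂ)) / i.factorial)
            * ((Ec ((n-i)+m)).eval 0 / (n-i).factorial) else 0 := by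
    intro i _
    rw [coeff_rescale, Gser_coeff]
    simp only [EP, coeff_mk]
    split_ifs
    · ring
    · ring
  rw [Finset.sum_congr rfl hterm, Finset.mul_sum]
  have : ∀ i ∈ Finset.range (n+1),
      (n.factorial : ℂ) * (if Even (n-i) then
          (r:ℂ)^i * ((Ec i).eval (x/(r:ℂ)) / i.factorial)
            * ((Ec ((n-i)+m)).eval 0 / (n-i).factorial) else 0)
      = if Even (n-i) then (n.factorial : ℂ) *
          ((r:ℂ)^i * ((Ec i).eval (x/(r:ℂ)) / i.factorial)
            * ((Ec ((n-i)+m)).eval 0 / (n-i).factorial)) else 0 := by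
    intro i _
    split_ifs <;> ring
  rw [Finset.sum_congr rfl this, ← Finset.sum_filter]
  apply Finset.sum_nbij' (i := fun i => (n - i)/2) (j := fun k => n - 2*k)
  · intro i hi
    simp only [Finset.mem_filter, Finset.mem_range] at hi
    simp only [Finset.mem_range]
    omega
  · intro k hk
    simp only [Finset.mem_range] at hk
    simp only [Finset.mem_filter, Finset.mem_range]
    constructor
    · omega
    · have h2k : 2*k ≤ n := by omega
      rw [show n - (n - 2*k) = 2*k by omega]
      exact even_two_mul k
  · intro i hi
    simp only [Finset.mem_filter, Finset.mem_range] at hi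
    obtain ⟨hi1, a, ha⟩ := hi
    omega
  · intro k hk
    simp only [Finset.mem_range] at hk
    omega
  · intro i hi
    simp only [Finset.mem_filter, Finset.mem_range] at hi
    obtain ⟨hi1, hev⟩ := hi
    obtain ⟨a, ha⟩ := hev
    have h1 : n - 2*((n-i)/2) = i := by omega
    have h2 : (n-i) = 2*((n-i)/2) := by omega
    rw [h1, ← h2]
    have h2k : n - i ≤ n := by omega
    have hfact : ((n.choose (n-i) : ℂ)) * ((n-i).factorial : ℂ) * ((n - (n-i)).factorial : ℂ)
        = (n.factorial : ℂ) := by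
      exact_mod_cast congrArg (Nat.cast (R := ℂ))
        (Nat.choose_mul_factorial_mul_factorial h2k)
    have hne1 : ((n-i).factorial : ℂ) ≠ 0 := Nat.cast_ne_zero.2 (Nat.factorial_ne_zero _)
    have hne2 : ((i).factorial : ℂ) ≠ 0 := Nat.cast_ne_zero.2 (Nat.factorial_ne_zero _)
    rw [show n - (n-i) = i by omega] at hfact
    rw [← hfact]
    field_simp

noncomputable def Aser (r : ℕ) (x : ℂ) : PowerSeries ℂ :=
  PowerSeries.C ((2:ℂ)^(r-1) / ((r-1).factorial : ℂ)) *
    ∑ j ∈ Finset.range r, PowerSeries.C ((-1:ℂ)^j * stir r (r-j)) *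
      (rescale (r:ℂ) (EP (x/(r:ℂ))) * Gser (r-1-j))

lemma A_gf (r : ℕ) (hr : 1 ≤ r) (x : ℂ) :
    (ee+1)^r * Aser r x = PowerSeries.C ((2:ℂ)^r) * rescale x ee := by
  have hr0 : ((r:ℂ)) ≠ 0 := Nat.cast_ne_zero.2 (by omega)
  have hP : (ee^r + 1) * rescale (r:ℂ) (EP (x/(r:ℂ)))
      = PowerSeries.C 2 * rescale x ee := by
    have h := congrArg (rescale (r:ℂ)) (euler_gf (x/(r:ℂ)))
    rw [map_mul, map_add, map_one, map_mul, resc_C, rescale_rescale] at h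
    rw [div_mul_cancel₀ x hr0] at h
    rw [PowerSeries.exp_pow_eq_rescale_exp]
    exact h
  unfold Aser
  have step1 : (ee+1)^r * (PowerSeries.C ((2:ℂ)^(r-1) / ((r-1).factorial : ℂ)) *
      ∑ j ∈ Finset.range r, PowerSeries.C ((-1:ℂ)^j * stir r (r-j)) *
        (rescale (r:ℂ) (EP (x/(r:ℂ))) * Gser (r-1-j)))
      = PowerSeries.C ((2:ℂ)^(r-1) / ((r-1).factorial : ℂ)) * PowerSeries.C (2⁻¹) *
          (rescale (r:ℂ) (EP (x/(r:ℂ))) *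
        ∑ j ∈ Finset.range r, PowerSeries.C ((-1:ℂ)^j * stir r (r-j)) *
          ((ee+1)^r * (fm (r-1-j) + rescale (-1:ℂ) (fm (r-1-j))))) := by
    rw [Finset.mul_sum, Finset.mul_sum, Finset.mul_sum]
    rw [Finset.mul_sum]
    apply Finset.sum_congr rfl
    intro j _
    unfold Gser
    ring
  rw [step1, star r hr]
  calc PowerSeries.C ((2:ℂ)^(r-1) / ((r-1).factorial : ℂ)) * PowerSeries.C (2⁻¹) *
        (rescale (r:ℂ) (EP (x/(r:ℂ))) * (PowerSeries.C (2 * ((r-1).factorial : ℂ)) * (ee^r + 1)))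
      = PowerSeries.C ((2:ℂ)^(r-1) / ((r-1).factorial : ℂ)) * PowerSeries.C (2⁻¹) *
          PowerSeries.C (2 * ((r-1).factorial : ℂ)) * ((ee^r + 1) * rescale (r:ℂ) (EP (x/(r:ℂ)))) := by
        ring
    _ = PowerSeries.C ((2:ℂ)^(r-1) / ((r-1).factorial : ℂ)) * PowerSeries.C (2⁻¹) *
          PowerSeries.C (2 * ((r-1).factorial : ℂ)) * (PowerSeries.C 2 * rescale x ee) := by
        rw [hP]
    _ = PowerSeries.C ((2:ℂ)^r) * rescale x ee := by
        have hfne : (((r-1).factorial : ℂ)) ≠ 0 := Nat.cast_ne_zero.2 (Nat.factorial_ne_zero _)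
        have hc : ((2:ℂ)^(r-1) / ((r-1).factorial : ℂ)) * 2⁻¹ * (2 * ((r-1).factorial:ℂ)) * 2
            = (2:ℂ)^r := by
          have h2 : (2:ℂ)^r = 2^(r-1) * 2 := by
            rw [← pow_succ]
            congr 1
            omega
          rw [h2]
          field_simp
        rw [← hc]
        simp only [map_mul]
        ring


/-- **Theorem 3.6.** The Euler polynomials of order `r ≥ 1`, defined by
`(eᵗ + 1)ʳ Σₙ Eₙ⁽ʳ⁾(x) tⁿ/n! = 2ʳ e^{xt}`, satisfy
`Eₙ⁽ʳ⁾(x) = (2^{r-1}/(r-1)!) Σ_{j=0}^{r-1} Σ_{2k ≤ n} (-1)ʲ s(r, r-j) C(n,2k) r^{n-2k}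
  E_{2k+r-j-1} E_{n-2k}(x/r)`, where `Eₘ = Eₘ(0)`. -/
theorem euler_order_r_stirling_expansion (r : ℕ) (hr : 1 ≤ r) (E : ℕ → ℂ → ℂ)
    (hE : ∀ x : ℂ,
      (PowerSeries.exp ℂ + 1) ^ r *
          PowerSeries.mk (fun n => E n x / (n.factorial : ℂ)) =
        PowerSeries.C ((2 : ℂ) ^ r) * PowerSeries.rescale x (PowerSeries.exp ℂ)) :
    ∀ (n : ℕ) (x : ℂ), E n x =
      (2 : ℂ) ^ (r - 1) / ((r - 1).factorial : ℂ) *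
        ∑ j ∈ Finset.range r, ∑ k ∈ Finset.range (n / 2 + 1),
          (-1 : ℂ) ^ j * stir r (r - j) * (n.choose (2 * k) : ℂ) * (r : ℂ) ^ (n - 2 * k) *
            (Ec (2 * k + r - j - 1)).eval 0 * (Ec (n - 2 * k)).eval (x / (r : ℂ)) := by
  intro n x
  have hne : ((ee+1)^r : PowerSeries ℂ) ≠ 0 := by
    intro h
    have h2 := congrArg (PowerSeries.constantCoeff) h
    rw [map_pow, map_add, PowerSeries.constantCoeff_exp, map_one, map_zero] at h2
    norm_num at h2
  have hu : PowerSeries.mk (fun n => E n x / (n.factorial : ℂ)) = Aser r x :=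
    mul_left_cancel₀ hne ((hE x).trans (A_gf r hr x).symm)
  have hcoeff := congrArg (PowerSeries.coeff n) hu
  rw [PowerSeries.coeff_mk] at hcoeff
  have hfacne : ((n.factorial : ℂ)) ≠ 0 := Nat.cast_ne_zero.2 (Nat.factorial_ne_zero _)
  have hEn : E n x = (n.factorial : ℂ) * PowerSeries.coeff n (Aser r x) := by
    rw [← hcoeff]
    field_simp
  have hAco : PowerSeries.coeff n (Aser r x)
      = ((2:ℂ)^(r-1) / ((r-1).factorial : ℂ)) *
        ∑ j ∈ Finset.range r, ((-1:ℂ)^j * stir r (r-j)) *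
          PowerSeries.coeff n (rescale (r:ℂ) (EP (x/(r:ℂ))) * Gser (r-1-j)) := by
    unfold Aser
    rw [PowerSeries.coeff_C_mul, map_sum]
    congr 1
    apply Finset.sum_congr rfl
    intro j _
    rw [PowerSeries.coeff_C_mul]
  rw [hEn, hAco, Finset.mul_sum, Finset.mul_sum, Finset.mul_sum]
  apply Finset.sum_congr rfl
  intro j hj
  have hj' : j < r := Finset.mem_range.mp hj
  have hPG := coeff_PG r hr x (r-1-j) n
  calc (n.factorial : ℂ) * (((2:ℂ)^(r-1) / ((r-1).factorial : ℂ)) *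
        (((-1:ℂ)^j * stir r (r-j)) *
          PowerSeries.coeff n (rescale (r:ℂ) (EP (x/(r:ℂ))) * Gser (r-1-j))))
      = ((2:ℂ)^(r-1) / ((r-1).factorial : ℂ)) * (((-1:ℂ)^j * stir r (r-j)) *
          ((n.factorial : ℂ) *
            PowerSeries.coeff n (rescale (r:ℂ) (EP (x/(r:ℂ))) * Gser (r-1-j)))) := by
        ring
    _ = ((2:ℂ)^(r-1) / ((r-1).factorial : ℂ)) * (((-1:ℂ)^j * stir r (r-j)) *
          ∑ k ∈ Finset.range (n/2+1),
            (n.choose (2*k) : ℂ) * (r:ℂ)^(n-2*k) * (Ec (2*k+(r-1-j))).eval 0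
              * (Ec (n-2*k)).eval (x/(r:ℂ))) := by rw [hPG]
    _ = (2:ℂ)^(r-1) / ((r-1).factorial : ℂ) *
          ∑ k ∈ Finset.range (n/2+1),
            (-1:ℂ)^j * stir r (r-j) * (n.choose (2*k) : ℂ) * (r:ℂ)^(n-2*k)
              * (Ec (2*k+r-j-1)).eval 0 * (Ec (n-2*k)).eval (x/(r:ℂ)) := by
        rw [Finset.mul_sum]
        congr 1
        apply Finset.sum_congr rfl
        intro k _
        rw [show 2*k+r-j-1 = 2*k+(r-1-j) by omega]
        ring
end

section
/- For every integer n ≥ 2 and every x ∈ ℂ, the Euler polynomial of order 2 satisfies Eₙ⁽²⁾(x) = 2ⁿ·Eₙ(x/2) + Σ_{k=1}^{⌊n/2⌋} C(n,2k)·2^{n+1−2k}·E_{2k+1}·E_{n−2k}(x/2), where Eₘ = Eₘ(0) is the value at 0 of the m-th Euler polynomial and C(n,2k) is the binomial coefficient. -/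
open PowerSeries

noncomputable def Bg (y : ℂ) : PowerSeries ℂ :=
  PowerSeries.mk fun n => (Bc n).eval y / n.factorial

noncomputable def Eg (y : ℂ) : PowerSeries ℂ :=
  PowerSeries.mk fun n => (Ec n).eval y / n.factorial

lemma Bg_spec (y : ℂ) :
    Bg y * (exp ℂ - 1) = PowerSeries.X * rescale y (exp ℂ) := by
  have h := Polynomial.bernoulli_generating_function (A := ℂ) y
  convert h using 2
  ext n
  simp only [Bg, coeff_mk, map_smul, Polynomial.aeval_def, Polynomial.eval₂_eq_eval_map,
    smul_eq_mul]
  rw [Bc, Algebra.smul_def, map_div₀, map_one, map_natCast, one_div, inv_mul_eq_div]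

lemma eval_Ec (m : ℕ) (y : ℂ) :
    (Ec m).eval y = 2 / ((m : ℂ) + 1) *
      ((Bc (m+1)).eval y - 2 ^ (m+1) * (Bc (m+1)).eval (y / 2)) := by
  have : (2:ℂ)⁻¹ * y = y / 2 := by ring
  simp [Ec, Polynomial.eval_comp, this]

lemma coeff_Bg (y : ℂ) (n : ℕ) : (PowerSeries.coeff (R := ℂ) n) (Bg y) = (Bc n).eval y / n.factorial := by
  simp [Bg]

lemma coeff_Eg (y : ℂ) (n : ℕ) : (PowerSeries.coeff (R := ℂ) n) (Eg y) = (Ec n).eval y / n.factorial := by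
  simp [Eg]

lemma Bc_zero_eval (y : ℂ) : (Bc 0).eval y = 1 := by
  simp [Bc, Polynomial.bernoulli_zero]

lemma X_mul_Eg (y : ℂ) :
    PowerSeries.X * Eg y = PowerSeries.C (R := ℂ) 2 * (Bg y - rescale 2 (Bg (y/2))) := by
  ext n
  rcases n with _ | n
  · rw [PowerSeries.coeff_C_mul, map_sub, PowerSeries.coeff_rescale, coeff_Bg, coeff_Bg]
    simp [Bc_zero_eval]
  · rw [PowerSeries.coeff_succ_X_mul, PowerSeries.coeff_C_mul, map_sub, coeff_Bg,
      PowerSeries.coeff_rescale, coeff_Bg, coeff_Eg, eval_Ec]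
    have h1 : ((n : ℂ) + 1) ≠ 0 := Nat.cast_add_one_ne_zero n
    have h2 : ((n.factorial : ℂ)) ≠ 0 := by exact_mod_cast Nat.factorial_ne_zero n
    rw [Nat.factorial_succ]
    push_cast
    field_simp

lemma exp_sub_one_ne_zero : exp ℂ - 1 ≠ 0 := fun h => by
  have := congrArg (PowerSeries.coeff (R := ℂ) 1) h
  simp [PowerSeries.coeff_exp] at this

lemma exp_add_one_ne_zero : exp ℂ + 1 ≠ 0 := fun h => by
  have := congrArg (PowerSeries.constantCoeff (R := ℂ)) h
  simp [PowerSeries.constantCoeff_exp] at this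

lemma Eg_spec (y : ℂ) :
    (exp ℂ + 1) * Eg y = PowerSeries.C (R := ℂ) 2 * rescale y (exp ℂ) := by
  have key : (PowerSeries.X * (exp ℂ - 1)) * ((exp ℂ + 1) * Eg y) =
      (PowerSeries.X * (exp ℂ - 1)) * (PowerSeries.C (R := ℂ) 2 * rescale y (exp ℂ)) := by
    have e2 : exp ℂ * exp ℂ = rescale (2 : ℂ) (exp ℂ) := by
      have h := exp_pow_eq_rescale_exp (A := ℂ) 2
      rw [pow_two] at h
      norm_num at h
      exact h
    have hr : rescale (2:ℂ) (Bg (y/2)) * (rescale (2:ℂ) (exp ℂ) - 1) =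
        PowerSeries.C (R := ℂ) 2 * (PowerSeries.X * rescale y (exp ℂ)) := by
      rw [show (1 : PowerSeries ℂ) = rescale (2:ℂ) 1 by simp, ← map_sub, ← map_mul, Bg_spec,
        map_mul, rescale_rescale, PowerSeries.rescale_X, show y/2*2 = y by ring]
      ring
    calc (PowerSeries.X * (exp ℂ - 1)) * ((exp ℂ + 1) * Eg y)
        = (exp ℂ - 1) * (exp ℂ + 1) * (PowerSeries.X * Eg y) := by ring
      _ = (exp ℂ - 1) * (exp ℂ + 1) *
            (PowerSeries.C (R := ℂ) 2 * (Bg y - rescale 2 (Bg (y/2)))) := by rw [X_mul_Eg]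
      _ = PowerSeries.C (R := ℂ) 2 * (exp ℂ + 1) * (Bg y * (exp ℂ - 1)) -
            PowerSeries.C (R := ℂ) 2 * ((exp ℂ * exp ℂ - 1) * rescale 2 (Bg (y/2))) := by ring
      _ = PowerSeries.C (R := ℂ) 2 * (exp ℂ + 1) * (PowerSeries.X * rescale y (exp ℂ)) -
            PowerSeries.C (R := ℂ) 2 * (PowerSeries.C (R := ℂ) 2 * (PowerSeries.X * rescale y (exp ℂ))) := by
          rw [Bg_spec, e2]
          rw [mul_comm (rescale (2:ℂ) (exp ℂ) - 1) (rescale (2:ℂ) (Bg (y/2))), hr]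
      _ = PowerSeries.X * ((exp ℂ + 1) - PowerSeries.C (R := ℂ) 2) *
            (PowerSeries.C (R := ℂ) 2 * rescale y (exp ℂ)) := by ring
      _ = (PowerSeries.X * (exp ℂ - 1)) * (PowerSeries.C (R := ℂ) 2 * rescale y (exp ℂ)) := by
          congr 2
          have : PowerSeries.C (R := ℂ) 2 = (1 : PowerSeries ℂ) + 1 := by
            rw [show (2:ℂ) = 1 + 1 by norm_num, map_add, map_one]
          rw [this]; ring
  exact mul_left_cancel₀ (mul_ne_zero PowerSeries.X_ne_zero exp_sub_one_ne_zero) key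

lemma Eg_zero_spec : (exp ℂ + 1) * Eg 0 = PowerSeries.C (R := ℂ) 2 := by
  have := Eg_spec 0
  rwa [rescale_zero, RingHom.comp_apply, constantCoeff_exp, map_one, mul_one] at this

lemma rescale_neg_one_exp : rescale (-1 : ℂ) (exp ℂ) * exp ℂ = 1 := by
  have h := PowerSeries.exp_mul_exp_neg_eq_one (A := ℂ)
  rw [PowerSeries.evalNegHom] at h
  rw [mul_comm]
  exact h

lemma rescale_C' (a r : ℂ) : rescale a (PowerSeries.C (R := ℂ) r) = PowerSeries.C (R := ℂ) r := by
  ext n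
  rw [PowerSeries.coeff_rescale]
  rcases n with _ | n <;> simp [PowerSeries.coeff_C]

lemma Eg_reflect : Eg 0 + rescale (-1 : ℂ) (Eg 0) = PowerSeries.C (R := ℂ) 2 := by
  have h1 : (exp ℂ + 1) * (Eg 0 + rescale (-1:ℂ) (Eg 0)) = (exp ℂ + 1) * PowerSeries.C (R := ℂ) 2 := by
    have h2 : (rescale (-1:ℂ) (exp ℂ) + 1) * rescale (-1:ℂ) (Eg 0) = PowerSeries.C (R := ℂ) 2 := by
      have := congrArg (rescale (-1 : ℂ)) Eg_zero_spec
      rw [map_mul, map_add, map_one] at this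
      rw [this, rescale_C']
    have h4 : exp ℂ * (rescale (-1:ℂ) (exp ℂ) + 1) = exp ℂ + 1 := by
      rw [mul_add, mul_one, mul_comm (exp ℂ) (rescale (-1:ℂ) (exp ℂ)), rescale_neg_one_exp, add_comm]
    have h3 : (exp ℂ + 1) * rescale (-1:ℂ) (Eg 0) = exp ℂ * PowerSeries.C (R := ℂ) 2 := by
      rw [← h4, mul_assoc, h2]
    rw [mul_add, Eg_zero_spec, h3]
    ring
  exact mul_left_cancel₀ exp_add_one_ne_zero h1

noncomputable def Qs : PowerSeries ℂ :=
  PowerSeries.mk fun i => (Ec (i+1)).eval 0 / i.factorial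

lemma coeff_Qs (i : ℕ) : (PowerSeries.coeff (R := ℂ) i) Qs = (Ec (i+1)).eval 0 / i.factorial := by
  simp [Qs]

theorem PowerSeries.coeff_derivativeFun' {R : Type*} [CommSemiring R] (f : PowerSeries R) (n : ℕ) :
    PowerSeries.coeff n f.derivativeFun = PowerSeries.coeff (n + 1) f * (n + 1) :=
  PowerSeries.coeff_derivative f n

theorem PowerSeries.derivativeFun_C' {R : Type*} [CommSemiring R] (r : R) :
    PowerSeries.derivativeFun (PowerSeries.C r) = 0 :=
  PowerSeries.derivative_C

lemma Qs_eq_deriv : Qs = PowerSeries.derivativeFun (Eg 0) := by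
  ext i
  rw [coeff_Qs, PowerSeries.coeff_derivativeFun', coeff_Eg, Nat.factorial_succ]
  have h1 : ((i : ℂ) + 1) ≠ 0 := Nat.cast_add_one_ne_zero i
  have h2 : ((i.factorial : ℂ)) ≠ 0 := by exact_mod_cast Nat.factorial_ne_zero i
  push_cast
  field_simp

lemma psDerivExp : PowerSeries.derivativeFun (exp ℂ) = exp ℂ := by
  ext n
  rw [PowerSeries.coeff_derivativeFun', PowerSeries.coeff_exp, PowerSeries.coeff_exp,
    Nat.factorial_succ]
  have h1 : ((n : ℂ) + 1) ≠ 0 := Nat.cast_add_one_ne_zero n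
  have h2 : ((n.factorial : ℂ)) ≠ 0 := by exact_mod_cast Nat.factorial_ne_zero n
  push_cast
  field_simp

lemma Qs_spec : (exp ℂ + 1) * Qs + exp ℂ * Eg 0 = 0 := by
  have h := congrArg PowerSeries.derivativeFun Eg_zero_spec
  rw [PowerSeries.derivativeFun_mul, PowerSeries.derivativeFun_C'] at h
  rw [show exp ℂ + 1 = exp ℂ + PowerSeries.C (R := ℂ) 1 by rw [map_one],
    PowerSeries.derivativeFun_add, PowerSeries.derivativeFun_C', psDerivExp, add_zero] at h
  rw [Qs_eq_deriv]
  rw [smul_eq_mul, smul_eq_mul] at h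
  rw [map_one] at h
  calc (exp ℂ + 1) * PowerSeries.derivativeFun (Eg 0) + exp ℂ * Eg 0
      = (exp ℂ + 1) * (Eg 0).derivativeFun + Eg 0 * exp ℂ := by ring
    _ = 0 := h

lemma key_S : (exp ℂ + 1)^2 * (PowerSeries.C (R := ℂ) 2 * Qs + PowerSeries.C (R := ℂ) 2) =
    PowerSeries.C (R := ℂ) 2 * (exp ℂ * exp ℂ + 1) := by
  have h1 := Qs_spec
  have h2 := Eg_zero_spec
  have hC : PowerSeries.C (R := ℂ) 2 = (1 : PowerSeries ℂ) + 1 := by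
    rw [show (2:ℂ) = 1 + 1 by norm_num, map_add, map_one]
  -- (e+1)^2 * (2Q + 2) = 2(e+1)((e+1)Q) /(e+1) ... expand:
  -- (e+1)^2*2Q = 2(e+1)*(-e*P) = -2e*((e+1)P) = -2e*C2 = -4e
  -- (e+1)^2*2 = 2e^2+4e+2, total = 2e^2+2
  linear_combination (PowerSeries.C (R := ℂ) 2 * (exp ℂ + 1)) * h1 - (PowerSeries.C (R := ℂ) 2 * exp ℂ) * h2 -
    (exp ℂ * PowerSeries.C (R := ℂ) 2) * hC

lemma Ec_odd_eval_zero (i : ℕ) (hi : Odd i) : (Ec (i+1)).eval 0 = 0 := by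
  have h := congrArg (PowerSeries.coeff (R := ℂ) (i+1)) Eg_reflect
  rw [map_add, coeff_Eg, PowerSeries.coeff_rescale, coeff_Eg, PowerSeries.coeff_C,
    if_neg (Nat.succ_ne_zero i)] at h
  rw [Even.neg_one_pow (Odd.add_one hi), one_mul] at h
  have hf : (((i+1).factorial : ℂ)) ≠ 0 := by exact_mod_cast Nat.factorial_ne_zero (i+1)
  field_simp at h
  simpa using h

lemma Ec_one_eval_zero : (Ec 1).eval 0 = -(1/2) := by
  have hB : (Bc 2).eval 0 = 1/6 := by
    rw [Bc, Polynomial.eval_map, Polynomial.eval₂_at_zero,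
      Polynomial.coeff_zero_eq_eval_zero, Polynomial.bernoulli_eval_zero]
    rw [show _root_.bernoulli 2 = 1/6 from by
      rw [_root_.bernoulli, bernoulli'_two]; norm_num]
    norm_num
  rw [eval_Ec]
  rw [show (0:ℂ)/2 = 0 by norm_num, hB]
  norm_num

lemma coeff_Ss (i : ℕ) :
    (PowerSeries.coeff (R := ℂ) i) (PowerSeries.C (R := ℂ) 2 * Qs + PowerSeries.C (R := ℂ) 2) =
      2 * (Ec (i+1)).eval 0 / i.factorial + (if i = 0 then 2 else 0) := by
  rw [map_add, PowerSeries.coeff_C_mul, coeff_Qs, PowerSeries.coeff_C, mul_div_assoc]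

lemma mkF_eq (x : ℂ) :
    PowerSeries.mk (fun n => ((2:ℂ)^n * (Ec n).eval (x/2) +
      ∑ k ∈ Finset.Icc 1 (n/2), (n.choose (2*k) : ℂ) * 2^(n+1-2*k) * (Ec (2*k+1)).eval 0 *
        (Ec (n-2*k)).eval (x/2)) / n.factorial) =
    (PowerSeries.C (R := ℂ) 2 * Qs + PowerSeries.C (R := ℂ) 2) * rescale 2 (Eg (x/2)) := by
  ext n
  rw [PowerSeries.coeff_mk, PowerSeries.coeff_mul,
    Finset.Nat.sum_antidiagonal_eq_sum_range_succ_mk, Finset.sum_range_succ']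
  dsimp only
  have hG2 : ∀ j : ℕ, (PowerSeries.coeff (R := ℂ) j) (rescale 2 (Eg (x/2))) =
      2^j * (Ec j).eval (x/2) / j.factorial := by
    intro j
    rw [PowerSeries.coeff_rescale, coeff_Eg, mul_div_assoc]
  have hfn : ((n.factorial : ℂ)) ≠ 0 := by exact_mod_cast Nat.factorial_ne_zero n
  -- the i = 0 term
  have h0 : (PowerSeries.coeff (R := ℂ) 0) (PowerSeries.C (R := ℂ) 2 * Qs + PowerSeries.C (R := ℂ) 2) *
      (PowerSeries.coeff (R := ℂ) (n - 0)) (rescale 2 (Eg (x/2))) =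
      (2:ℂ)^n * (Ec n).eval (x/2) / n.factorial := by
    rw [coeff_Ss, hG2, if_pos rfl, Nat.sub_zero, Ec_one_eval_zero]
    norm_num
  rw [h0]
  -- the rest
  have hsub : ((Finset.Icc 1 (n/2)).image (fun k => 2*k-1)) ⊆ Finset.range n := by
    intro i hi
    simp only [Finset.mem_image, Finset.mem_Icc] at hi
    obtain ⟨k, ⟨hk1, hk2⟩, rfl⟩ := hi
    have : 2*k ≤ n := by
      have := Nat.div_mul_le_self n 2
      omega
    exact Finset.mem_range.mpr (by omega)
  have hzero : ∀ i ∈ Finset.range n, i ∉ (Finset.Icc 1 (n/2)).image (fun k => 2*k-1) →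
      (PowerSeries.coeff (R := ℂ) (i+1)) (PowerSeries.C (R := ℂ) 2 * Qs + PowerSeries.C (R := ℂ) 2) *
        (PowerSeries.coeff (R := ℂ) (n - (i+1))) (rescale 2 (Eg (x/2))) = 0 := by
    intro i hi hni
    rcases Nat.even_or_odd i with he | ho
    · rw [coeff_Ss, if_neg (Nat.succ_ne_zero i), Ec_odd_eval_zero (i+1)
        (by rcases he with ⟨m, hm⟩; exact ⟨m, by omega⟩)]
      simp
    · exfalso
      apply hni
      obtain ⟨m, hm⟩ := ho
      simp only [Finset.mem_image, Finset.mem_Icc]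
      refine ⟨m+1, ⟨by omega, ?_⟩, by omega⟩
      have hin : i < n := Finset.mem_range.mp hi
      omega
  have hinj : ∀ a ∈ Finset.Icc 1 (n/2), ∀ b ∈ Finset.Icc 1 (n/2),
      2*a-1 = 2*b-1 → a = b := by
    intro a ha b hb hab
    simp only [Finset.mem_Icc] at ha hb
    omega
  have hrest : ∑ i ∈ Finset.range n,
      (PowerSeries.coeff (R := ℂ) (i+1)) (PowerSeries.C (R := ℂ) 2 * Qs + PowerSeries.C (R := ℂ) 2) *
        (PowerSeries.coeff (R := ℂ) (n - (i+1))) (rescale 2 (Eg (x/2))) =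
      (∑ k ∈ Finset.Icc 1 (n/2), (n.choose (2*k) : ℂ) * 2^(n+1-2*k) * (Ec (2*k+1)).eval 0 *
        (Ec (n-2*k)).eval (x/2)) / n.factorial := by
    rw [← Finset.sum_subset hsub hzero, Finset.sum_image hinj, Finset.sum_div]
    apply Finset.sum_congr rfl
    intro k hk
    simp only [Finset.mem_Icc] at hk
    obtain ⟨hk1, hk2⟩ := hk
    have h2kn : 2*k ≤ n := by
      have := Nat.div_mul_le_self n 2
      omega
    rw [show 2*k-1+1 = 2*k by omega, coeff_Ss,
      if_neg (by omega), add_zero, hG2]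
    have hc := Nat.choose_mul_factorial_mul_factorial h2kn
    have hc' : ((n.choose (2*k) : ℂ)) * (2*k).factorial * (n - 2*k).factorial = n.factorial := by
      exact_mod_cast hc
    have hf1 : (((2*k).factorial : ℂ)) ≠ 0 := by exact_mod_cast Nat.factorial_ne_zero (2*k)
    have hf2 : (((n-2*k).factorial : ℂ)) ≠ 0 := by exact_mod_cast Nat.factorial_ne_zero (n-2*k)
    rw [show n+1-2*k = (n-2*k)+1 by omega, pow_succ]
    field_simp
    linear_combination -(Ec (2*k+1)).eval 0 * (Ec (n-2*k)).eval (x/2) * hc'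
  rw [hrest]
  ring

/-- **Euler polynomials of order 2.** If `(Eₙ⁽²⁾(x))` are the Euler polynomials of order
`2`, defined by `(eᵗ + 1)² Σₙ Eₙ⁽²⁾(x) tⁿ/n! = 2² e^{xt}`, then for `n ≥ 2`,
`Eₙ⁽²⁾(x) = 2ⁿ Eₙ(x/2) + Σ_{k=1}^{⌊n/2⌋} C(n,2k) 2^{n+1-2k} E_{2k+1} E_{n-2k}(x/2)`,
where `Eₘ = Eₘ(0)`. -/
theorem euler_order_two_expansion (E : ℕ → ℂ → ℂ)
    (hE : ∀ x : ℂ,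
      (PowerSeries.exp ℂ + 1) ^ 2 *
          PowerSeries.mk (fun n => E n x / (n.factorial : ℂ)) =
        PowerSeries.C (R := ℂ) ((2 : ℂ) ^ 2) * PowerSeries.rescale x (PowerSeries.exp ℂ))
    (n : ℕ) (hn : 2 ≤ n) (x : ℂ) :
    E n x =
      (2 : ℂ) ^ n * (Ec n).eval (x / 2) +
        ∑ k ∈ Finset.Icc 1 (n / 2),
          (n.choose (2 * k) : ℂ) * (2 : ℂ) ^ (n + 1 - 2 * k) * (Ec (2 * k + 1)).eval 0 *
            (Ec (n - 2 * k)).eval (x / 2) := by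
  have hGF : (exp ℂ + 1) ^ 2 *
      PowerSeries.mk (fun n => ((2:ℂ)^n * (Ec n).eval (x/2) +
        ∑ k ∈ Finset.Icc 1 (n/2), (n.choose (2*k) : ℂ) * 2^(n+1-2*k) * (Ec (2*k+1)).eval 0 *
          (Ec (n-2*k)).eval (x/2)) / n.factorial) =
      PowerSeries.C (R := ℂ) ((2:ℂ)^2) * rescale x (exp ℂ) := by
    rw [mkF_eq, ← mul_assoc, key_S]
    have e2 : exp ℂ * exp ℂ = rescale (2 : ℂ) (exp ℂ) := by
      have h := exp_pow_eq_rescale_exp (A := ℂ) 2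
      rw [pow_two] at h
      norm_num at h
      exact h
    have hmid : (exp ℂ * exp ℂ + 1) * rescale 2 (Eg (x/2)) =
        PowerSeries.C (R := ℂ) 2 * rescale x (exp ℂ) := by
      rw [e2, show (1 : PowerSeries ℂ) = rescale (2:ℂ) 1 by simp, ← map_add, ← map_mul,
        Eg_spec, map_mul, rescale_C', rescale_rescale, show x/2*2 = x by ring]
    calc PowerSeries.C (R := ℂ) 2 * (exp ℂ * exp ℂ + 1) * rescale 2 (Eg (x/2))
        = PowerSeries.C (R := ℂ) 2 * ((exp ℂ * exp ℂ + 1) * rescale 2 (Eg (x/2))) := by ring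
      _ = PowerSeries.C (R := ℂ) 2 * (PowerSeries.C (R := ℂ) 2 * rescale x (exp ℂ)) := by rw [hmid]
      _ = PowerSeries.C (R := ℂ) ((2:ℂ)^2) * rescale x (exp ℂ) := by
          rw [← mul_assoc, ← map_mul]
          norm_num
  have hcancel := mul_left_cancel₀ (pow_ne_zero 2 exp_add_one_ne_zero)
    ((hE x).trans hGF.symm)
  have hco := congrArg (PowerSeries.coeff (R := ℂ) n) hcancel
  rw [PowerSeries.coeff_mk, PowerSeries.coeff_mk] at hco
  have hfn : ((n.factorial : ℂ)) ≠ 0 := by exact_mod_cast Nat.factorial_ne_zero n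
  field_simp at hco
  exact hco
end
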